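/- arXiv:1806.04405 — 2 statements merged into one kernel-verified Lean document; each statement's English description precedes it below -/
import Mathlib

section
/- Let A ⊆ B be an extension of integral domains with A integrally closed (normal) and B integral over A. Then the inclusion A → B satisfies the going-down property. -/
def RingHom.GoingDown {A B : Type} [CommRing A] [CommRing B] (f : A →+* B) : Prop :=
  ∀ (p' p : Ideal A), p'.IsPrime → p.IsPrime → p' < p →
    ∀ P : Ideal B, P.IsPrime → P.comap f = p →
      ∃ P' : Ideal B, P'.IsPrime ∧ P' < P ∧ P'.comap f = p'

theorem Algebra.HasGoingDown.goingDown_algebraMap (A B : Type) [CommRing A] [CommRing B]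
    [Algebra A B] [Algebra.HasGoingDown A B] : (algebraMap A B).GoingDown := by
  intro p' p _ _ hlt P _ hP
  have : P.LiesOver p := ⟨hP.symm⟩
  obtain ⟨P', hP'P, hP', hP'p'⟩ := Ideal.exists_ideal_lt_liesOver_of_lt P hlt
  exact ⟨P', hP', hP'P, hP'p'.over.symm⟩

theorem goingDown_of_integral_of_integrallyClosed_general (A B : Type) [CommRing A] [CommRing B]
    [IsDomain B] [Algebra A B] (hinj : Function.Injective (algebraMap A B))
    [IsIntegrallyClosed A] [Algebra.IsIntegral A B] :
    (algebraMap A B).GoingDown := by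
  have : FaithfulSMul A B := (faithfulSMul_iff_algebraMap_injective A B).mpr hinj
  -- `Algebra.HasGoingDown A B` is Mathlib's instance for integral extensions of an integrally
  -- closed domain (Stacks 00H8).
  exact Algebra.HasGoingDown.goingDown_algebraMap A B

/-- If `A ⊆ B` is an extension of domains with `A` integrally closed and
`B` integral over `A`, then `A → B` satisfies going-down. -/
theorem goingDown_of_integral_of_integrallyClosed (A B : Type) [CommRing A] [CommRing B]
    [IsDomain A] [IsDomain B] [Algebra A B] (hinj : Function.Injective (algebraMap A B))
    [IsIntegrallyClosed A] [Algebra.IsIntegral A B] :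
    (algebraMap A B).GoingDown :=
  goingDown_of_integral_of_integrallyClosed_general A B hinj
end

section
/- Let R = k[x₀,x₁,x₂,x₃] over an algebraically closed field k, I = (x₀,x₁) ∩ (x₂,x₃), and J = (x₀x₃ − x₁x₂, x₁³ − x₀²x₂, x₀x₂² − x₁²x₃, x₂³ − x₁x₃²). Then I ∩ J = (x₀x₃ − x₁x₂, x₀x₂² − x₁²x₃), which is generated by a regular sequence of length 2 (a complete intersection). -/
/-!
Write `f = x₀x₃ − x₁x₂` and `g = x₀x₂² − x₁²x₃`; both vanish on the two lines and on the quartic.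
Modulo `(f, g)` the other two generators of `J` are killed by one line each:
`(x₂, x₃)·(x₁³ − x₀²x₂)` and `(x₀, x₁)·(x₂³ − x₁x₃²)` lie in `(f, g)`. As `(f, g) ⊆ I`, the modular
law reduces the equality to: if `b(x₁³ − x₀²x₂) + d(x₂³ − x₁x₃²) ∈ I` then it lies in `(f, g)`.
Since `x₂³ − x₁x₃² ∈ (x₂, x₃)` and `x₁³ − x₀²x₂ ∉ (x₂, x₃)`, primality of `(x₂, x₃)` gives
`b ∈ (x₂, x₃)`, and symmetrically `d ∈ (x₀, x₁)`.

For regularity, `f` is prime: `(f)` is the kernel of `k[x₀,x₁,x₂,x₃] → Frac k[x₀,x₁,x₂]`,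
`x₃ ↦ x₁x₂/x₀`, by pseudo-division by `f` with respect to `x₃` and because `x₀` is a
non-zero-divisor modulo `f`. As `f ∤ g` and `(f, g)` is proper, `f, g` is a regular sequence.
-/

open MvPolynomial

namespace MvPolynomial

variable {σ R : Type*} [CommRing R]

theorem sub_aeval_mem {I : Ideal (MvPolynomial σ R)} {ν : σ → MvPolynomial σ R}
    (hν : ∀ i, X i - ν i ∈ I) (p : MvPolynomial σ R) : p - aeval ν p ∈ I := by
  induction p using MvPolynomial.induction_on with
  | C a => simp
  | add p q hp hq => simpa [add_sub_add_comm] using I.add_mem hp hq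
  | mul_X p i hp =>
    have : p * X i - aeval ν (p * X i) = (p - aeval ν p) * X i + aeval ν p * (X i - ν i) := by
      simp only [map_mul, aeval_X]; ring
    rw [this]
    exact I.add_mem (I.mul_mem_right _ hp) (I.mul_mem_left _ (hν i))

theorem span_X_image_eq_ker (s : Set σ) [DecidablePred (· ∈ s)] :
    Ideal.span (X '' s) =
      RingHom.ker (aeval (fun i => if i ∈ s then 0 else X i) :
        MvPolynomial σ R →ₐ[R] MvPolynomial σ R) := by
  refine le_antisymm (Ideal.span_le.mpr ?_) fun p hp => ?_
  · rintro _ ⟨i, hi, rfl⟩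
    simp [hi]
  · have hν (i : σ) :
        X i - (if i ∈ s then 0 else X i) ∈ Ideal.span (X '' s : Set (MvPolynomial σ R)) := by
      split_ifs with hi
      · simpa using Ideal.subset_span (Set.mem_image_of_mem X hi)
      · simp
    have := sub_aeval_mem hν p
    rwa [(RingHom.mem_ker).mp hp, sub_zero] at this

theorem isPrime_span_X_image [IsDomain R] (s : Set σ) :
    (Ideal.span (X '' s : Set (MvPolynomial σ R))).IsPrime := by
  classical
  rw [span_X_image_eq_ker]
  exact RingHom.ker_isPrime _

theorem isPrime_span_X_pair [IsDomain R] (i j : σ) :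
    (Ideal.span {X i, X j} : Ideal (MvPolynomial σ R)).IsPrime := by
  simpa [Set.image_pair] using isPrime_span_X_image (R := R) {i, j}

end MvPolynomial

open Pointwise in
theorem RingTheory.Sequence.isRegular_pair_of_prime {R : Type*} [CommRing R] [IsDomain R]
    {r s : R} (hr : Prime r) (hs : ¬r ∣ s) (hrs : Ideal.span {r, s} ≠ ⊤) :
    IsRegular R [r, s] := by
  have smul_top (t : R) : t • (⊤ : Submodule R R) = Ideal.span {t} := by
    rw [← Submodule.ideal_span_singleton_smul, smul_eq_mul, Ideal.mul_top]
  rw [isRegular_iff, isWeaklyRegular_cons_iff, isWeaklyRegular_singleton_iff]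
  refine ⟨⟨IsSMulRegular.of_ne_zero hr.ne_zero, ?_⟩, ?_⟩
  · rw [isSMulRegular_iff_right_eq_zero_of_smul]
    intro x hx
    obtain ⟨a, rfl⟩ := Submodule.Quotient.mk_surjective _ x
    rw [← Submodule.Quotient.mk_smul, Submodule.Quotient.mk_eq_zero, smul_top, smul_eq_mul,
      Ideal.mem_span_singleton] at hx
    rw [Submodule.Quotient.mk_eq_zero, smul_top, Ideal.mem_span_singleton]
    exact (hr.dvd_or_dvd hx).resolve_left hs
  · rw [Ne, eq_comm, smul_eq_mul, Ideal.mul_top]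
    simpa [Ideal.span_insert] using hrs

namespace SkewLinesTwistedQuartic

variable {k : Type*} [CommRing k]

noncomputable def quadric : MvPolynomial (Fin 4) k := X 0 * X 3 - X 1 * X 2

noncomputable def cubic : MvPolynomial (Fin 4) k := X 0 * X 2 ^ 2 - X 1 ^ 2 * X 3

theorem span_quadric_cubic_le_span_X01 :
    Ideal.span {quadric, cubic} ≤ Ideal.span {(X 0 : MvPolynomial (Fin 4) k), X 1} := by
  rw [Ideal.span_le, Set.insert_subset_iff, Set.singleton_subset_iff]
  exact ⟨Ideal.mem_span_pair.mpr ⟨X 3, -X 2, by rw [quadric]; ring⟩,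
    Ideal.mem_span_pair.mpr ⟨X 2 ^ 2, -(X 1 * X 3), by rw [cubic]; ring⟩⟩

theorem span_quadric_cubic_le_span_X23 :
    Ideal.span {quadric, cubic} ≤ Ideal.span {(X 2 : MvPolynomial (Fin 4) k), X 3} := by
  rw [Ideal.span_le, Set.insert_subset_iff, Set.singleton_subset_iff]
  exact ⟨Ideal.mem_span_pair.mpr ⟨-X 1, X 0, by rw [quadric]; ring⟩,
    Ideal.mem_span_pair.mpr ⟨X 0 * X 2, -(X 1 ^ 2), by rw [cubic]; ring⟩⟩

theorem mul_mem_span_quadric_cubic_of_mem_span_X23 {u : MvPolynomial (Fin 4) k}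
    (hu : u ∈ Ideal.span {X 2, X 3}) :
    u * (X 1 ^ 3 - X 0 ^ 2 * X 2) ∈ Ideal.span {quadric, cubic} := by
  obtain ⟨u₂, u₃, rfl⟩ := Ideal.mem_span_pair.mp hu
  exact Ideal.mem_span_pair.mpr ⟨-(u₂ * X 1 ^ 2) - u₃ * X 0 * X 2, -(u₂ * X 0) - u₃ * X 1,
    by rw [quadric, cubic]; ring⟩

theorem mul_mem_span_quadric_cubic_of_mem_span_X01 {u : MvPolynomial (Fin 4) k}
    (hu : u ∈ Ideal.span {X 0, X 1}) :
    u * (X 2 ^ 3 - X 1 * X 3 ^ 2) ∈ Ideal.span {quadric, cubic} := by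
  obtain ⟨u₀, u₁, rfl⟩ := Ideal.mem_span_pair.mp hu
  exact Ideal.mem_span_pair.mpr ⟨-(u₀ * X 1 * X 3) - u₁ * X 2 ^ 2, u₀ * X 2 + u₁ * X 3,
    by rw [quadric, cubic]; ring⟩

theorem exists_X_zero_pow_mul_eq (h : MvPolynomial (Fin 4) k) :
    ∃ (N : ℕ) (q : MvPolynomial (Fin 4) k) (r : MvPolynomial (Fin 3) k),
      X 0 ^ N * h = q * quadric + rename Fin.castSucc r := by
  induction h using MvPolynomial.induction_on with
  | C a => exact ⟨0, 0, C a, by simp⟩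
  | add p p' hp hp' =>
    obtain ⟨N, q, r, hpqr⟩ := hp
    obtain ⟨N', q', r', hpqr'⟩ := hp'
    refine ⟨N + N', X 0 ^ N' * q + X 0 ^ N * q', X 0 ^ N' * r + X 0 ^ N * r', ?_⟩
    simp only [map_add, map_mul, map_pow, rename_X, Fin.castSucc_zero]
    linear_combination X 0 ^ N' * hpqr + X 0 ^ N * hpqr'
  | mul_X p i hp =>
    obtain ⟨N, q, r, hpqr⟩ := hp
    rcases Fin.eq_castSucc_or_eq_last i with ⟨j, rfl⟩ | rfl
    · refine ⟨N, q * X j.castSucc, r * X j, ?_⟩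
      simp only [map_mul, rename_X]
      linear_combination X j.castSucc * hpqr
    · -- `x₀x₃ ≡ x₁x₂` modulo `quadric`
      refine ⟨N + 1, X 0 * X 3 * q + rename Fin.castSucc r, r * X 1 * X 2, ?_⟩
      simp only [map_mul, rename_X, quadric, Fin.reduceLast, Fin.castSucc_one,
        Fin.reduceCastSucc] at hpqr ⊢
      linear_combination (X 0 * X 3) * hpqr

variable [IsDomain k]

theorem inf_span_le_span_quadric_cubic :
    Ideal.span {X 0, X 1} ⊓ Ideal.span {X 2, X 3} ⊓
        Ideal.span {X 1 ^ 3 - X 0 ^ 2 * X 2, X 2 ^ 3 - X 1 * X 3 ^ 2} ≤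
      Ideal.span {(quadric : MvPolynomial (Fin 4) k), cubic} := by
  classical
  rintro _ ⟨⟨hp₀₁, hp₂₃⟩, hp⟩
  obtain ⟨b, d, rfl⟩ := Ideal.mem_span_pair.mp hp
  have hb : b ∈ Ideal.span {X 2, X 3} := by
    refine ((isPrime_span_X_pair 2 3).mem_or_mem (y := X 1 ^ 3 - X 0 ^ 2 * X 2) ?_).resolve_right ?_
    · rw [← add_sub_cancel_right (b * _) (d * _)]
      refine sub_mem hp₂₃ (Ideal.mul_mem_left _ _ ?_)
      exact Ideal.mem_span_pair.mpr ⟨X 2 ^ 2, -(X 1 * X 3), by ring⟩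
    · rw [← Set.image_pair, span_X_image_eq_ker, RingHom.mem_ker]
      simp
  have hd : d ∈ Ideal.span {X 0, X 1} := by
    refine ((isPrime_span_X_pair 0 1).mem_or_mem (y := X 2 ^ 3 - X 1 * X 3 ^ 2) ?_).resolve_right ?_
    · rw [← add_sub_cancel_left (b * _) (d * _)]
      refine sub_mem hp₀₁ (Ideal.mul_mem_left _ _ ?_)
      exact Ideal.mem_span_pair.mpr ⟨-(X 0 * X 2), X 1 ^ 2, by ring⟩
    · rw [← Set.image_pair, span_X_image_eq_ker, RingHom.mem_ker]
      simp
  exact add_mem (mul_mem_span_quadric_cubic_of_mem_span_X23 hb)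
    (mul_mem_span_quadric_cubic_of_mem_span_X01 hd)

theorem inf_eq_span_quadric_cubic :
    Ideal.span {X 0, X 1} ⊓ Ideal.span {X 2, X 3} ⊓
        Ideal.span {quadric, X 1 ^ 3 - X 0 ^ 2 * X 2, cubic, X 2 ^ 3 - X 1 * X 3 ^ 2} =
      Ideal.span {(quadric : MvPolynomial (Fin 4) k), cubic} := by
  have hJ : Ideal.span {quadric, X 1 ^ 3 - X 0 ^ 2 * X 2, cubic, X 2 ^ 3 - X 1 * X 3 ^ 2} =
      Ideal.span {(quadric : MvPolynomial (Fin 4) k), cubic} ⊔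
        Ideal.span {X 1 ^ 3 - X 0 ^ 2 * X 2, X 2 ^ 3 - X 1 * X 3 ^ 2} := by
    rw [← Ideal.span_union, Set.insert_union, Set.singleton_union, Set.insert_comm _ cubic]
  have hI := le_inf span_quadric_cubic_le_span_X01 (span_quadric_cubic_le_span_X23 (k := k))
  rw [hJ, inf_comm, sup_inf_assoc_of_le _ hI, inf_comm]
  exact sup_eq_left.mpr inf_span_le_span_quadric_cubic

theorem quadric_dvd_of_dvd_X_zero_mul {h : MvPolynomial (Fin 4) k}
    (hh : quadric ∣ X 0 * h) : quadric ∣ h := by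
  classical
  obtain ⟨a, ha⟩ := hh
  have hP := isPrime_span_X_image (R := k) {(0 : Fin 4)}
  rw [Set.image_singleton] at hP
  have hquadric : quadric ∉ Ideal.span {(X 0 : MvPolynomial (Fin 4) k)} := by
    rw [← Set.image_singleton, span_X_image_eq_ker, RingHom.mem_ker, quadric]
    simp [X_ne_zero]
  obtain ⟨b, rfl⟩ := Ideal.mem_span_singleton.mp <|
    (hP.mem_or_mem (ha ▸ Ideal.mem_span_singleton.mpr (dvd_mul_right _ _))).resolve_left hquadric
  exact ⟨b, mul_left_cancel₀ (X_ne_zero 0) (by rw [ha]; ring)⟩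

theorem quadric_dvd_of_dvd_X_zero_pow_mul {h : MvPolynomial (Fin 4) k} (N : ℕ)
    (hh : quadric ∣ X 0 ^ N * h) : quadric ∣ h := by
  induction N with
  | zero => simpa using hh
  | succ N ih => exact ih (quadric_dvd_of_dvd_X_zero_mul (by rwa [pow_succ', mul_assoc] at hh))

noncomputable def toFunctionField :
    MvPolynomial (Fin 4) k →ₐ[k] FractionRing (MvPolynomial (Fin 3) k) :=
  aeval <| Fin.snoc (fun i => algebraMap _ _ (X i : MvPolynomial (Fin 3) k))
    (algebraMap _ _ (X 1 * X 2 : MvPolynomial (Fin 3) k) /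
      algebraMap _ _ (X 0 : MvPolynomial (Fin 3) k))

theorem toFunctionField_rename (r : MvPolynomial (Fin 3) k) :
    toFunctionField (rename Fin.castSucc r) = algebraMap _ _ r :=
  AlgHom.congr_fun (algHom_ext fun i => by simp [toFunctionField] :
    toFunctionField.comp (rename Fin.castSucc) = IsScalarTower.toAlgHom k _ _) r

theorem toFunctionField_quadric : toFunctionField (quadric : MvPolynomial (Fin 4) k) = 0 := by
  have hX₀ : algebraMap _ (FractionRing (MvPolynomial (Fin 3) k))
      (X 0 : MvPolynomial (Fin 3) k) ≠ 0 :=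
    (IsFractionRing.injective _ _).ne_iff' (map_zero _) |>.mpr (X_ne_zero 0)
  have hquadric : (quadric : MvPolynomial (Fin 4) k) =
      rename Fin.castSucc (X 0) * X (Fin.last 3) - rename Fin.castSucc (X 1 * X 2) := by
    simp [quadric]
  rw [hquadric, map_sub, map_mul, toFunctionField_rename, toFunctionField_rename, toFunctionField,
    aeval_X, Fin.snoc_last, mul_div_cancel₀ _ hX₀, sub_self]

theorem ker_toFunctionField :
    RingHom.ker (toFunctionField : MvPolynomial (Fin 4) k →ₐ[k] _) = Ideal.span {quadric} := by
  refine le_antisymm (fun h hh => ?_) ?_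
  · obtain ⟨N, q, r, hqr⟩ := exists_X_zero_pow_mul_eq h
    have hr : r = 0 := by
      have := congrArg toFunctionField hqr
      rw [map_mul, (RingHom.mem_ker).mp hh, map_add, map_mul, toFunctionField_quadric,
        toFunctionField_rename] at this
      exact IsFractionRing.injective _ (FractionRing (MvPolynomial (Fin 3) k))
        (by simpa using this.symm)
    rw [hr, map_zero, add_zero] at hqr
    exact Ideal.mem_span_singleton.mpr
      (quadric_dvd_of_dvd_X_zero_pow_mul N ⟨q, by rw [hqr, mul_comm]⟩)
  · rw [Ideal.span_le, Set.singleton_subset_iff]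
    exact toFunctionField_quadric

theorem prime_quadric : Prime (quadric : MvPolynomial (Fin 4) k) := by
  have hne : (quadric : MvPolynomial (Fin 4) k) ≠ 0 := fun h => by
    simpa [quadric] using congrArg (eval ![1, 0, 0, 1]) h
  rw [← Ideal.span_singleton_prime hne, ← ker_toFunctionField]
  exact RingHom.ker_isPrime _

theorem not_quadric_dvd_cubic : ¬(quadric : MvPolynomial (Fin 4) k) ∣ cubic := by
  rintro ⟨a, ha⟩
  simpa [quadric, cubic] using congrArg (eval ![1, 0, 1, 0]) ha

theorem span_quadric_cubic_ne_top :
    Ideal.span {quadric, cubic} ≠ (⊤ : Ideal (MvPolynomial (Fin 4) k)) :=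
  ne_top_of_le_ne_top (isPrime_span_X_pair 0 1).ne_top span_quadric_cubic_le_span_X01

end SkewLinesTwistedQuartic

open SkewLinesTwistedQuartic in
theorem skew_lines_inter_twisted_quartic_general (k : Type) [Field k]
    (I J : Ideal (MvPolynomial (Fin 4) k))
    (hI : I = Ideal.span {X 0, X 1} ⊓ Ideal.span {X 2, X 3})
    (hJ : J = Ideal.span
      { X 0 * X 3 - X 1 * X 2,
        (X 1 : MvPolynomial (Fin 4) k) ^ 3 - (X 0) ^ 2 * X 2,
        X 0 * (X 2) ^ 2 - (X 1) ^ 2 * X 3,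
        (X 2) ^ 3 - X 1 * (X 3) ^ 2 }) :
    I ⊓ J = Ideal.span {X 0 * X 3 - X 1 * X 2, X 0 * (X 2) ^ 2 - (X 1) ^ 2 * X 3} ∧
      RingTheory.Sequence.IsRegular (R := MvPolynomial (Fin 4) k) (MvPolynomial (Fin 4) k)
        [X 0 * X 3 - X 1 * X 2, X 0 * (X 2) ^ 2 - (X 1) ^ 2 * X 3] := by
  subst hI hJ
  exact ⟨inf_eq_span_quadric_cubic, RingTheory.Sequence.isRegular_pair_of_prime prime_quadric
    not_quadric_dvd_cubic span_quadric_cubic_ne_top⟩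

/-- For `R = k[x₀,x₁,x₂,x₃]` over an algebraically closed field `k`, with
`I = (x₀,x₁) ∩ (x₂,x₃)` (two skew lines) and
`J = (x₀x₃ − x₁x₂, x₁³ − x₀²x₂, x₀x₂² − x₁²x₃, x₂³ − x₁x₃²)` (twisted quartic),
one has `I ∩ J = (x₀x₃ − x₁x₂, x₀x₂² − x₁²x₃)`, a complete intersection generated by a
regular sequence of length `2`. -/
theorem skew_lines_inter_twisted_quartic (k : Type) [Field k] [IsAlgClosed k]
    (I J : Ideal (MvPolynomial (Fin 4) k))
    (hI : I = Ideal.span {X 0, X 1} ⊓ Ideal.span {X 2, X 3})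
    (hJ : J = Ideal.span
      { X 0 * X 3 - X 1 * X 2,
        (X 1 : MvPolynomial (Fin 4) k) ^ 3 - (X 0) ^ 2 * X 2,
        X 0 * (X 2) ^ 2 - (X 1) ^ 2 * X 3,
        (X 2) ^ 3 - X 1 * (X 3) ^ 2 }) :
    I ⊓ J = Ideal.span {X 0 * X 3 - X 1 * X 2, X 0 * (X 2) ^ 2 - (X 1) ^ 2 * X 3} ∧
      RingTheory.Sequence.IsRegular (R := MvPolynomial (Fin 4) k) (MvPolynomial (Fin 4) k)
        [X 0 * X 3 - X 1 * X 2, X 0 * (X 2) ^ 2 - (X 1) ^ 2 * X 3] :=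
  skew_lines_inter_twisted_quartic_general k I J hI hJ
end
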